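/- Let $(\nu_j)_{j\ge1}$ be independent random variables with $\nu_j \sim \mathrm{Beta}(1-\sigma, \alpha+j\sigma)$ where $\sigma\in[0,1)$ and $\alpha>-\sigma$, and define stick-breaking weights $\xi_h = \nu_h \prod_{j=1}^{h-1}(1-\nu_j)$. Then almost surely $\sum_{h=1}^\infty \xi_h = 1$. -/

import Mathlib

/-!
After `n` breaks the stick left is `∏_{j<n} (1 - ν_j)`, so the partial sums of the weights are
`1 - ∏_{j<n} (1 - ν_j)` and it suffices that this product tends to `0` almost surely. The product
is nonincreasing, and by independence its expectation is `∏_{j<n} (1 - c_j)` with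
`c_j = 𝔼 ν_j = (1 - σ) / (1 + α + j σ)`. Since `∑ c_j` diverges like the harmonic series, these
expectations tend to `0`, hence so does the expectation of the almost sure limit of the product.
-/

open MeasureTheory ProbabilityTheory

/-- The Beta distribution with parameters `a, b`, as a measure on `ℝ`. -/
noncomputable def betaMeasure (a b : ℝ) : Measure ℝ :=
  (volume.restrict (Set.Ioo (0 : ℝ) 1)).withDensity fun x =>
    ENNReal.ofReal
      (Real.Gamma (a + b) / (Real.Gamma a * Real.Gamma b) * x ^ (a - 1) * (1 - x) ^ (b - 1))

open Filter Topology Finset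
open scoped ENNReal

section Beta

open Set

lemma beta_add_one_right {a b : ℝ} (hb : b ≠ 0) (hab : a + b ≠ 0) :
    beta a (b + 1) = b / (a + b) * beta a b := by
  rw [beta, beta, ← add_assoc, Real.Gamma_add_one hb, Real.Gamma_add_one hab]
  field_simp

lemma betaMeasure_eq_withDensity_betaPDF (a b : ℝ) :
    _root_.betaMeasure a b = volume.withDensity (betaPDF a b) := by
  rw [_root_.betaMeasure, ← withDensity_indicator measurableSet_Ioo]
  congr 1
  funext x
  by_cases hx : x ∈ Ioo (0 : ℝ) 1
  · rw [indicator_of_mem hx, betaPDF_of_pos_lt_one hx.1 hx.2, beta, one_div_div]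
  · rw [indicator_of_notMem hx, betaPDF, betaPDFReal, if_neg (show ¬(0 < x ∧ x < 1) from hx),
      ENNReal.ofReal_zero]

lemma ae_mem_Ioo_betaMeasure (a b : ℝ) : ∀ᵐ x ∂(_root_.betaMeasure a b), x ∈ Ioo (0 : ℝ) 1 := by
  refine ae_iff.2 (?_ : _root_.betaMeasure a b (Ioo 0 1)ᶜ = 0)
  rw [_root_.betaMeasure, withDensity_apply _ measurableSet_Ioo.compl,
    Measure.restrict_restrict measurableSet_Ioo.compl]
  simp

lemma betaPDFReal_nonneg {a b : ℝ} (ha : 0 < a) (hb : 0 < b) (x : ℝ) :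
    0 ≤ betaPDFReal a b x := by
  by_cases hx : 0 < x ∧ x < 1
  · exact (betaPDFReal_pos hx.1 hx.2 ha hb).le
  · simp [betaPDFReal, hx]

lemma one_sub_mul_betaPDFReal {a b : ℝ} (ha : 0 < a) (hb : 0 < b) (x : ℝ) :
    (1 - x) * betaPDFReal a b x = (1 - a / (a + b)) * betaPDFReal a (b + 1) x := by
  have hab : 0 < a + b := add_pos ha hb
  unfold betaPDFReal
  split_ifs with hx
  · rw [beta_add_one_right hb.ne' hab.ne', show b + 1 - 1 = (b - 1) + 1 by ring,
      Real.rpow_add_one (sub_pos.2 hx.2).ne']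
    have hbeta := beta_pos ha hb
    field_simp
    ring
  · simp

lemma measurable_betaPDF (a b : ℝ) : Measurable (betaPDF a b) :=
  (measurable_betaPDFReal a b).ennreal_ofReal

lemma lintegral_ofReal_one_sub_betaMeasure {a b : ℝ} (ha : 0 < a) (hb : 0 < b) :
    ∫⁻ x, ENNReal.ofReal (1 - x) ∂(_root_.betaMeasure a b) =
      ENNReal.ofReal (1 - a / (a + b)) := by
  have hmean : 0 ≤ 1 - a / (a + b) := by
    rw [sub_nonneg, div_le_one (by linarith)]
    linarith
  rw [betaMeasure_eq_withDensity_betaPDF,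
    lintegral_withDensity_eq_lintegral_mul _ (measurable_betaPDF a b) (by fun_prop)]
  calc ∫⁻ x, (betaPDF a b * fun x ↦ ENNReal.ofReal (1 - x)) x
      = ∫⁻ x, ENNReal.ofReal (1 - a / (a + b)) * betaPDF a (b + 1) x := by
        congr 1
        funext x
        rw [Pi.mul_apply, betaPDF, betaPDF, ← ENNReal.ofReal_mul hmean,
          ← one_sub_mul_betaPDFReal ha hb, mul_comm,
          ENNReal.ofReal_mul' (betaPDFReal_nonneg ha hb x)]
    _ = ENNReal.ofReal (1 - a / (a + b)) := by
        rw [lintegral_const_mul _ (measurable_betaPDF a (b + 1)),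
          lintegral_betaPDF_eq_one ha (by linarith), mul_one]

end Beta

lemma tendsto_prod_range_one_sub_of_not_summable {c : ℕ → ℝ} (hc0 : ∀ j, 0 ≤ c j)
    (hc1 : ∀ j, c j ≤ 1) (hc : ¬Summable c) :
    Tendsto (fun n ↦ ∏ j ∈ range n, (1 - c j)) atTop (𝓝 0) := by
  have hexp : Tendsto (fun n ↦ Real.exp (-∑ j ∈ range n, c j)) atTop (𝓝 0) :=
    Real.tendsto_exp_atBot.comp <| tendsto_neg_atBot_iff.2 <|
      (not_summable_iff_tendsto_nat_atTop_of_nonneg hc0).1 hc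
  refine squeeze_zero (fun n ↦ prod_nonneg fun j _ ↦ sub_nonneg.2 (hc1 j)) (fun n ↦ ?_) hexp
  calc ∏ j ∈ range n, (1 - c j)
      ≤ ∏ j ∈ range n, Real.exp (-c j) :=
        prod_le_prod (fun j _ ↦ sub_nonneg.2 (hc1 j)) fun j _ ↦ by
          linarith [Real.add_one_le_exp (-c j)]
    _ = Real.exp (-∑ j ∈ range n, c j) := by rw [← Real.exp_sum, sum_neg_distrib]

lemma not_summable_inv_add_mul {β σ : ℝ} (hβ : 0 < β) (hσ : 0 ≤ σ) :
    ¬Summable fun j : ℕ ↦ (β + j * σ)⁻¹ := by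
  intro hsum
  have hbound : ∀ j : ℕ, (β + σ)⁻¹ * ((j : ℝ) + 1)⁻¹ ≤ (β + j * σ)⁻¹ := fun j ↦ by
    rw [← mul_inv]
    gcongr
    nlinarith [mul_nonneg (Nat.cast_nonneg (α := ℝ) j) hβ.le]
  have hharm : Summable fun j : ℕ ↦ ((j : ℝ) + 1)⁻¹ :=
    (summable_mul_left_iff (inv_ne_zero (by linarith))).1 <|
      hsum.of_nonneg_of_le (fun j ↦ by positivity) hbound
  exact Real.not_summable_natCast_inv <| (summable_nat_add_iff 1).1 <| by exact_mod_cast hharm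

lemma sum_range_mul_prod_one_sub {R : Type*} [CommRing R] (v : ℕ → R) (n : ℕ) :
    ∑ h ∈ range n, v h * ∏ j ∈ range h, (1 - v j) = 1 - ∏ j ∈ range n, (1 - v j) := by
  induction n with
  | zero => simp
  | succ n ih =>
    rw [sum_range_succ, ih, prod_range_succ]
    ring

lemma hasSum_mul_prod_one_sub {v : ℕ → ℝ} (hv : ∀ j, v j ∈ Set.Icc 0 1)
    (hlim : Tendsto (fun n ↦ ∏ j ∈ range n, (1 - v j)) atTop (𝓝 0)) :
    HasSum (fun h ↦ v h * ∏ j ∈ range h, (1 - v j)) 1 := by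
  rw [hasSum_iff_tendsto_nat_of_nonneg fun h ↦
    mul_nonneg (hv h).1 (prod_nonneg fun j _ ↦ sub_nonneg.2 (hv j).2)]
  simp_rw [sum_range_mul_prod_one_sub]
  simpa using (tendsto_const_nhds (x := (1 : ℝ))).sub hlim

section Probability

variable {Ω : Type*} [MeasurableSpace Ω] {μ : Measure Ω}

lemma ae_tendsto_zero_of_antitone_of_tendsto_lintegral {F : ℕ → Ω → ℝ≥0∞}
    (hF : ∀ n, Measurable (F n)) (hanti : ∀ᵐ ω ∂μ, Antitone fun n ↦ F n ω)
    (hlim : Tendsto (fun n ↦ ∫⁻ ω, F n ω ∂μ) atTop (𝓝 0)) :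
    ∀ᵐ ω ∂μ, Tendsto (fun n ↦ F n ω) atTop (𝓝 0) := by
  have hinf : ∫⁻ ω, ⨅ n, F n ω ∂μ = 0 :=
    le_antisymm (ge_of_tendsto' hlim fun n ↦ lintegral_mono fun ω ↦ iInf_le _ n) zero_le
  filter_upwards [hanti, (lintegral_eq_zero_iff (Measurable.iInf hF)).1 hinf] with ω hω h0
  simpa [h0] using tendsto_atTop_iInf hω

lemma ae_tendsto_prod_range_zero_of_iIndepFun {X : ℕ → Ω → ℝ} {c : ℕ → ℝ}
    (hX : ∀ j, Measurable (X j)) (hindep : iIndepFun X μ)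
    (hX01 : ∀ᵐ ω ∂μ, ∀ j, X j ω ∈ Set.Icc 0 1)
    (hmean : ∀ j, ∫⁻ ω, ENNReal.ofReal (X j ω) ∂μ = ENNReal.ofReal (1 - c j))
    (hc0 : ∀ j, 0 ≤ c j) (hc1 : ∀ j, c j ≤ 1) (hc : ¬Summable c) :
    ∀ᵐ ω ∂μ, Tendsto (fun n ↦ ∏ j ∈ range n, X j ω) atTop (𝓝 0) := by
  set F : ℕ → Ω → ℝ≥0∞ := fun n ω ↦ ∏ j ∈ range n, ENNReal.ofReal (X j ω)
  have hYmeas : ∀ j, Measurable fun ω ↦ ENNReal.ofReal (X j ω) := fun j ↦ (hX j).ennreal_ofReal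
  have hFmeas : ∀ n, Measurable (F n) := fun n ↦ Finset.measurable_prod _ fun j _ ↦ hYmeas j
  have hlintegral : ∀ n, ∫⁻ ω, F n ω ∂μ = ENNReal.ofReal (∏ j ∈ range n, (1 - c j)) := by
    intro n
    calc ∫⁻ ω, F n ω ∂μ = ∏ j ∈ range n, ∫⁻ ω, ENNReal.ofReal (X j ω) ∂μ :=
          lintegral_prod_eq_prod_lintegral_of_indepFun _ _
            (hindep.comp _ fun _ ↦ ENNReal.measurable_ofReal) hYmeas
      _ = ENNReal.ofReal (∏ j ∈ range n, (1 - c j)) := by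
          rw [ENNReal.ofReal_prod_of_nonneg fun j _ ↦ sub_nonneg.2 (hc1 j)]
          exact prod_congr rfl fun j _ ↦ hmean j
  have hlim : Tendsto (fun n ↦ ∫⁻ ω, F n ω ∂μ) atTop (𝓝 0) := by
    simpa [hlintegral] using
      ENNReal.tendsto_ofReal (tendsto_prod_range_one_sub_of_not_summable hc0 hc1 hc)
  have hanti : ∀ᵐ ω ∂μ, Antitone fun n ↦ F n ω := by
    filter_upwards [hX01] with ω hω
    refine antitone_nat_of_succ_le fun n ↦ ?_
    show ∏ j ∈ range (n + 1), _ ≤ ∏ j ∈ range n, _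
    rw [prod_range_succ]
    exact mul_le_of_le_one_right' (ENNReal.ofReal_le_one.2 (hω n).2)
  filter_upwards [hX01, ae_tendsto_zero_of_antitone_of_tendsto_lintegral hFmeas hanti hlim]
    with ω hω hFω
  have hreal := (ENNReal.tendsto_toReal ENNReal.zero_ne_top).comp hFω
  refine hreal.congr fun n ↦ ?_
  show (∏ j ∈ range n, ENNReal.ofReal (X j ω)).toReal = _
  rw [← ENNReal.ofReal_prod_of_nonneg fun j _ ↦ (hω j).1,
    ENNReal.toReal_ofReal (prod_nonneg fun j _ ↦ (hω j).1)]

end Probability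

-- `ν j` is the paper's `ν_{j+1}` and `ξ h` its `ξ_{h+1}`.
theorem py_stick_breaking_sums_to_one_general
    {Ω : Type*} [MeasurableSpace Ω] (P : Measure Ω)
    (σ α : ℝ) (hσ0 : 0 ≤ σ) (hσ1 : σ < 1) (hα : -σ < α)
    (ν : ℕ → Ω → ℝ) (hmeas : ∀ j, Measurable (ν j))
    (hindep : iIndepFun ν P)
    (hlaw : ∀ j : ℕ, Measure.map (ν j) P = _root_.betaMeasure (1 - σ) (α + (j + 1) * σ))
    (ξ : ℕ → Ω → ℝ)
    (hξ : ∀ h ω, ξ h ω = ν h ω * ∏ j ∈ Finset.range h, (1 - ν j ω)) :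
    ∀ᵐ ω ∂P, ∑' h : ℕ, ξ h ω = 1 := by
  have ha : 0 < 1 - σ := by linarith
  have hb : ∀ j : ℕ, 0 < α + (j + 1) * σ := fun j ↦ by
    nlinarith [mul_nonneg (Nat.cast_nonneg (α := ℝ) j) hσ0]
  set c : ℕ → ℝ := fun j ↦ (1 - σ) / ((1 - σ) + (α + (j + 1) * σ))
  have hc0 : ∀ j, 0 ≤ c j := fun j ↦ div_nonneg ha.le (by linarith [hb j])
  have hc1 : ∀ j, c j ≤ 1 := fun j ↦ (div_le_one (by linarith [hb j])).2 (by linarith [hb j])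
  have hc : ¬Summable c := by
    have hden : ∀ j : ℕ, (1 - σ) + (α + (j + 1) * σ) = (1 + α) + j * σ := fun j ↦ by ring
    simp_rw [c, div_eq_mul_inv, hden, summable_mul_left_iff ha.ne']
    exact not_summable_inv_add_mul (by linarith) hσ0
  have hunit : ∀ᵐ ω ∂P, ∀ j, ν j ω ∈ Set.Icc 0 1 := ae_all_iff.2 fun j ↦
    (ae_of_ae_map (hmeas j).aemeasurable ((hlaw j).symm ▸ ae_mem_Ioo_betaMeasure _ _)).mono
      fun _ h ↦ Set.Ioo_subset_Icc_self h
  have hstick : ∀ᵐ ω ∂P, Tendsto (fun n ↦ ∏ j ∈ range n, (1 - ν j ω)) atTop (𝓝 0) := by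
    refine ae_tendsto_prod_range_zero_of_iIndepFun (c := c) (fun j ↦ (hmeas j).const_sub 1)
      (hindep.comp _ fun _ ↦ measurable_const.sub measurable_id) ?_ (fun j ↦ ?_) hc0 hc1 hc
    · filter_upwards [hunit] with ω hω j
      exact ⟨sub_nonneg.2 (hω j).2, by linarith [(hω j).1]⟩
    · rw [← lintegral_map (f := fun x ↦ ENNReal.ofReal (1 - x)) (by fun_prop) (hmeas j),
        hlaw j, lintegral_ofReal_one_sub_betaMeasure ha (hb j)]
  filter_upwards [hunit, hstick] with ω hω hlim
  simp_rw [hξ]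
  exact (hasSum_mul_prod_one_sub hω hlim).tsum_eq

/-- Stick-breaking for the Pitman–Yor process: with independent
`ν_j ∼ Beta(1 - σ, α + j σ)` (here `ν j` plays the role of `ν_{j+1}`), `σ ∈ [0,1)`,
`α > -σ`, the stick-breaking weights `ξ_h = ν_h ∏_{j<h} (1 - ν_j)` sum to one
almost surely. -/
theorem py_stick_breaking_sums_to_one
    {Ω : Type*} [MeasurableSpace Ω] (P : Measure Ω) [IsProbabilityMeasure P]
    (σ α : ℝ) (hσ0 : 0 ≤ σ) (hσ1 : σ < 1) (hα : -σ < α)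
    (ν : ℕ → Ω → ℝ) (hmeas : ∀ j, Measurable (ν j))
    (hindep : iIndepFun ν P)
    (hlaw : ∀ j : ℕ, Measure.map (ν j) P = _root_.betaMeasure (1 - σ) (α + (j + 1) * σ))
    (ξ : ℕ → Ω → ℝ)
    (hξ : ∀ h ω, ξ h ω = ν h ω * ∏ j ∈ Finset.range h, (1 - ν j ω)) :
    ∀ᵐ ω ∂P, ∑' h : ℕ, ξ h ω = 1 :=
  py_stick_breaking_sums_to_one_general P σ α hσ0 hσ1 hα ν hmeas hindep hlaw ξ hξ
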